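/- Let p > 2 be prime, s ≥ 1, m ≥ 1, and let α be a p-adic integer. Let z = Σ_{j=1}^{s−1} ((−1)^(j+1)/j) α^j p^(2j−2) (a p-adic integer). Then Σ_{j=m}^{s−1} s(j,m) α^j p^(2j−1)/j! ≡ (p^(2m−1)/m!) z^m (mod p^s), where s(j,m) are Stirling numbers of the first kind. -/

import Mathlib

/-!
Let `L = ∑_{j=1}^{s-1} (-1)^(j+1) X^j / j` be the truncation of `log (1 + X)` and `y = α p²`, so
that `p² z = L(y)`. Since `(1 + X) L' = 1 - (-X)^(s-1)`, the series identity
`log (1 + X)^m / m! = ∑ s(n,m) X^n / n!` survives for `L^m` in degrees `< s`; hence the left-hand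
sum is `(p·m!)⁻¹` times the part of `L^m(y)` of degree `< s`, while the right-hand side is
`(p·m!)⁻¹ L^m(y)`. The difference is the tail `∑_{n ≥ s} c_n yⁿ` of `L^m(y)`. As `v_p(k) < k`, the
coefficients of `L` have norm `≤ p^(k-1)`, so `|c_n| ≤ p^(n-m)`; with `|y| ≤ p⁻²` and
`|(p·m!)⁻¹| ≤ p^m` each tail term has norm `≤ p^(-n) ≤ p^(-s)`, and the ultrametric inequality
finishes.
-/

/-- Signed Stirling numbers of the first kind, defined by
`x(x-1)⋯(x-j+1) = ∑_m stirling1 j m * x^m`. -/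
def stirling1 : ℕ → ℕ → ℤ
  | 0, 0 => 1
  | 0, _ + 1 => 0
  | j + 1, 0 => -(j : ℤ) * stirling1 j 0
  | j + 1, m + 1 => stirling1 j m - (j : ℤ) * stirling1 j (m + 1)

theorem stirling1_succ_zero : ∀ n : ℕ, stirling1 (n + 1) 0 = 0
  | 0 => by simp [stirling1]
  | n + 1 => by rw [stirling1, stirling1_succ_zero n, mul_zero]

theorem stirling1_eq_zero_of_lt : ∀ {n m : ℕ}, n < m → stirling1 n m = 0
  | 0, _ + 1, _ => rfl
  | n + 1, m + 1, h => by
    rw [stirling1, stirling1_eq_zero_of_lt (by omega), stirling1_eq_zero_of_lt (by omega),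
      mul_zero, sub_zero]

open Polynomial Finset

theorem Polynomial.coeff_X_mul_derivative {R : Type*} [CommSemiring R] (q : R[X]) (n : ℕ) :
    (X * derivative q).coeff n = n * q.coeff n := by
  cases n with
  | zero => simp
  | succ n => rw [coeff_X_mul, coeff_derivative]; push_cast; ring

noncomputable def logTrunc (K : Type*) [Field K] (N : ℕ) : K[X] :=
  ∑ j ∈ Icc 1 N, C ((-1 : K) ^ (j + 1) / j) * X ^ j

namespace logTrunc

variable {K : Type*} [Field K] (N : ℕ)

theorem coeff (k : ℕ) :
    (logTrunc K N).coeff k = if k ∈ Icc 1 N then (-1 : K) ^ (k + 1) / k else 0 := by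
  simp only [logTrunc, finsetSum_coeff, coeff_C_mul, coeff_X_pow, mul_ite, mul_one, mul_zero,
    sum_ite_eq]

theorem coeff_zero : (logTrunc K N).coeff 0 = 0 := by simp [coeff]

theorem eval (x : K) : (logTrunc K N).eval x = ∑ j ∈ Icc 1 N, (-1) ^ (j + 1) / j * x ^ j := by
  simp [logTrunc, eval_finsetSum]

variable [CharZero K]

theorem derivative : derivative (logTrunc K N) = ∑ i ∈ range N, (-X) ^ i := by
  rw [logTrunc, map_sum, ← Ico_add_one_right_eq_Icc, sum_Ico_eq_sum_range]
  refine sum_congr rfl fun i _ ↦ ?_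
  have hi : ((1 + i : ℕ) : K) ≠ 0 := Nat.cast_ne_zero.mpr (by omega)
  rw [derivative_C_mul_X_pow, div_mul_cancel₀ _ hi, Nat.add_sub_cancel_left, neg_pow (X : K[X]),
    show 1 + i + 1 = i + 2 by omega, pow_add, neg_one_sq, mul_one, C_pow, C_neg, C_1]

theorem one_add_X_mul_derivative :
    (1 + X) * Polynomial.derivative (logTrunc K N) = 1 - (-X) ^ N := by
  rw [derivative]
  linear_combination -geom_sum_mul (-X : K[X]) N

theorem coeff_pow_recurrence (m : ℕ) {n : ℕ} (hn : n < N) :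
    (n + 1) * (logTrunc K N ^ (m + 1)).coeff (n + 1) + n * (logTrunc K N ^ (m + 1)).coeff n =
      (m + 1) * (logTrunc K N ^ m).coeff n := by
  have := one_add_X_mul_derivative (K := K) N
  have key : (1 + X) * Polynomial.derivative (logTrunc K N ^ (m + 1)) =
      C ((m : K) + 1) * (logTrunc K N ^ m - (-1) ^ N * logTrunc K N ^ m * X ^ N) := by
    rw [derivative_pow, Nat.add_sub_cancel, Nat.cast_succ]
    linear_combination (C ((m : K) + 1) * logTrunc K N ^ m) * this
  have hn' := congrArg (Polynomial.coeff · n) key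
  simp only [add_mul, one_mul, coeff_add, coeff_C_mul, coeff_sub, coeff_mul_X_pow',
    if_neg (not_le.mpr hn), sub_zero, coeff_X_mul_derivative, coeff_derivative] at hn'
  linear_combination hn'

theorem coeff_pow_mul_factorial {n : ℕ} (hn : n ≤ N) (m : ℕ) :
    (logTrunc K N ^ m).coeff n * n.factorial = m.factorial * stirling1 n m := by
  induction n generalizing m with
  | zero =>
    cases m with
    | zero => simp [stirling1]
    | succ m => simp [stirling1, pow_succ, mul_coeff_zero, coeff_zero]
  | succ n ih =>
    cases m with
    | zero => simp [stirling1_succ_zero, coeff_one]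
    | succ m =>
      have hrec := coeff_pow_recurrence (K := K) N m (n := n) (by omega)
      have ih₀ := ih (by omega) m
      have ih₁ := ih (by omega) (m + 1)
      rw [stirling1, Nat.factorial_succ, Nat.factorial_succ]
      rw [Nat.factorial_succ] at ih₁
      push_cast at hrec ih₀ ih₁ ⊢
      linear_combination (n.factorial : K) * hrec - (n : K) * ih₁ + ((m : K) + 1) * ih₀

end logTrunc

theorem sum_Icc_stirling1_eq_sum_coeff_pow_logTrunc {K : Type*} [Field K] [CharZero K]
    {π : K} (hπ : π ≠ 0) (x : K) (N : ℕ) {m : ℕ} (hm : 1 ≤ m) :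
    ∑ j ∈ Icc m N, (stirling1 j m : K) * x ^ j * π ^ (2 * j - 1) / j.factorial =
      (π * m.factorial)⁻¹ *
        ∑ n ∈ range (N + 1), (logTrunc K N ^ m).coeff n * (x * π ^ 2) ^ n := by
  rw [mul_sum, ← sum_subset (fun n hn ↦ mem_range.mpr (Nat.lt_succ_of_le (mem_Icc.mp hn).2))]
  · refine sum_congr rfl fun n hn ↦ ?_
    obtain ⟨hmn, hnN⟩ := mem_Icc.mp hn
    have hcoeff := logTrunc.coeff_pow_mul_factorial (K := K) N hnN m
    have hpow : π ^ (2 * n) = π * π ^ (2 * n - 1) := by rw [← pow_succ']; congr 1; omega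
    have hn! : (n.factorial : K) ≠ 0 := Nat.cast_ne_zero.mpr n.factorial_ne_zero
    have hm! : (m.factorial : K) ≠ 0 := Nat.cast_ne_zero.mpr m.factorial_ne_zero
    rw [mul_pow, ← pow_mul, hpow, div_eq_iff hn!]
    field_simp
    linear_combination -x ^ n * hcoeff
  · intro n hn hnIcc
    have hnm : n < m := by
      by_contra h
      exact hnIcc (mem_Icc.mpr ⟨by omega, by simpa [Nat.lt_succ_iff] using hn⟩)
    have hcoeff := logTrunc.coeff_pow_mul_factorial (K := K) N
      (Nat.lt_succ_iff.mp (mem_range.mp hn)) m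
    rw [stirling1_eq_zero_of_lt hnm, Int.cast_zero, mul_zero,
      mul_eq_zero_iff_right (Nat.cast_ne_zero.mpr n.factorial_ne_zero)] at hcoeff
    rw [hcoeff, zero_mul, mul_zero]

theorem pow_div_factorial_mul_pow_eq_eval_pow_logTrunc {K : Type*} [Field K] [CharZero K]
    {π : K} (hπ : π ≠ 0) (x : K) (N : ℕ) {m : ℕ} (hm : 1 ≤ m) :
    π ^ (2 * m - 1) / m.factorial *
        (∑ j ∈ Icc 1 N, (-1 : K) ^ (j + 1) / j * x ^ j * π ^ (2 * j - 2)) ^ m =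
      (π * m.factorial)⁻¹ * (logTrunc K N ^ m).eval (x * π ^ 2) := by
  have hsum : π ^ 2 * ∑ j ∈ Icc 1 N, (-1 : K) ^ (j + 1) / j * x ^ j * π ^ (2 * j - 2) =
      (logTrunc K N).eval (x * π ^ 2) := by
    rw [logTrunc.eval, mul_sum]
    refine sum_congr rfl fun j hj ↦ ?_
    have hpow : π ^ (2 * j) = π ^ 2 * π ^ (2 * j - 2) := by
      rw [← pow_add]; congr 1; have := (mem_Icc.mp hj).1; omega
    rw [mul_pow, ← pow_mul, hpow]
    ring
  have hpow : π ^ (2 * m) = π * π ^ (2 * m - 1) := by rw [← pow_succ']; congr 1; omega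
  have hm! : (m.factorial : K) ≠ 0 := Nat.cast_ne_zero.mpr m.factorial_ne_zero
  rw [eval_pow, ← hsum, mul_pow, ← pow_mul, hpow]
  field_simp

namespace Polynomial

variable {K : Type*} [NormedRing K] [IsUltrametricDist K]

theorem norm_eval_sub_sum_range_le (P : K[X]) (x : K) (s : ℕ) {B : ℝ} (hB : 0 ≤ B)
    (h : ∀ n, s ≤ n → ‖P.coeff n * x ^ n‖ ≤ B) :
    ‖P.eval x - ∑ n ∈ range s, P.coeff n * x ^ n‖ ≤ B := by
  have hD : P.natDegree < max s (P.natDegree + 1) := by omega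
  rw [eval_eq_sum_range' hD, ← sum_range_add_sum_Ico _ (le_max_left _ _), add_sub_cancel_left]
  exact IsUltrametricDist.norm_sum_le_of_forall_le_of_nonneg hB
    fun n hn ↦ h n (mem_Ico.mp hn).1

theorem norm_coeff_mul_le_zpow {ρ : ℝ} (hρ : 0 < ρ) {P Q : K[X]} {a b : ℤ}
    (hP : ∀ k, ‖P.coeff k‖ ≤ ρ ^ ((k : ℤ) - a)) (hQ : ∀ k, ‖Q.coeff k‖ ≤ ρ ^ ((k : ℤ) - b))
    (n : ℕ) : ‖(P * Q).coeff n‖ ≤ ρ ^ ((n : ℤ) - (a + b)) := by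
  rw [coeff_mul]
  refine IsUltrametricDist.norm_sum_le_of_forall_le_of_nonneg (by positivity) fun x hx ↦ ?_
  calc ‖P.coeff x.1 * Q.coeff x.2‖ ≤ ‖P.coeff x.1‖ * ‖Q.coeff x.2‖ := norm_mul_le _ _
    _ ≤ ρ ^ ((x.1 : ℤ) - a) * ρ ^ ((x.2 : ℤ) - b) := by gcongr <;> first | exact hP _ | exact hQ _
    _ = ρ ^ ((n : ℤ) - (a + b)) := by
      rw [← zpow_add₀ hρ.ne', ← mem_antidiagonal.mp hx]
      push_cast
      ring_nf

theorem norm_coeff_pow_le_zpow [NormOneClass K] {ρ : ℝ} (hρ : 0 < ρ) {P : K[X]} {a : ℤ}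
    (hP : ∀ k, ‖P.coeff k‖ ≤ ρ ^ ((k : ℤ) - a)) (m n : ℕ) :
    ‖(P ^ m).coeff n‖ ≤ ρ ^ ((n : ℤ) - m * a) := by
  induction m generalizing n with
  | zero =>
    rw [pow_zero, coeff_one]
    split_ifs with h
    · simp [h]
    · rw [norm_zero]; positivity
  | succ m ih =>
    rw [pow_succ, Nat.cast_succ, add_one_mul]
    exact norm_coeff_mul_le_zpow hρ ih hP n

end Polynomial

namespace Padic

variable {p : ℕ} [Fact p.Prime]

theorem norm_inv_natCast_le_zpow {n : ℕ} (hn : n ≠ 0) {e : ℤ} (he : (padicValNat p n : ℤ) ≤ e) :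
    ‖(n : ℚ_[p])⁻¹‖ ≤ (p : ℝ) ^ e := by
  rw [norm_inv, norm_eq_zpow_neg_valuation (Nat.cast_ne_zero.mpr hn), valuation_natCast,
    zpow_neg, inv_inv]
  exact zpow_le_zpow_right₀ (mod_cast (Fact.out : p.Prime).one_le) he

theorem norm_inv_natCast_le (n : ℕ) (hn : n ≠ 0) : ‖(n : ℚ_[p])⁻¹‖ ≤ (p : ℝ) ^ ((n : ℤ) - 1) :=
  norm_inv_natCast_le_zpow hn (by
    have := (padicValNat_le_nat_log (p := p) n).trans_lt (Nat.log_lt_self p hn); omega)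

theorem norm_inv_factorial_le (n : ℕ) (hn : n ≠ 0) :
    ‖(n.factorial : ℚ_[p])⁻¹‖ ≤ (p : ℝ) ^ ((n : ℤ) - 1) :=
  norm_inv_natCast_le_zpow n.factorial_ne_zero (by
    have := padicValNat_factorial_lt_of_ne_zero p hn; omega)

theorem norm_inv_p_mul_factorial_le (n : ℕ) (hn : n ≠ 0) :
    ‖((p : ℚ_[p]) * n.factorial)⁻¹‖ ≤ (p : ℝ) ^ (n : ℤ) := by
  rw [mul_inv, norm_mul, norm_inv, norm_p, inv_inv]
  calc (p : ℝ) * ‖(n.factorial : ℚ_[p])⁻¹‖ ≤ p * p ^ ((n : ℤ) - 1) := by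
        gcongr; exact norm_inv_factorial_le n hn
    _ = p ^ (n : ℤ) := by
        rw [← zpow_one_add₀ (Nat.cast_ne_zero.mpr (Fact.out : p.Prime).ne_zero)]; ring_nf

end Padic

theorem logTrunc.norm_coeff_le {p : ℕ} [Fact p.Prime] (N k : ℕ) :
    ‖(logTrunc ℚ_[p] N).coeff k‖ ≤ (p : ℝ) ^ ((k : ℤ) - 1) := by
  rw [logTrunc.coeff]
  split_ifs with hk
  · rw [div_eq_mul_inv, norm_mul, norm_pow, norm_neg, norm_one, one_pow, one_mul]
    exact Padic.norm_inv_natCast_le k (by have := (mem_Icc.mp hk).1; omega)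
  · rw [norm_zero]; positivity

theorem logTrunc.norm_coeff_pow_mul_pow_le {p : ℕ} [Fact p.Prime] (N m n : ℕ) {y : ℚ_[p]}
    (hy : ‖y‖ ≤ (p : ℝ) ^ (-2 : ℤ)) :
    ‖(logTrunc ℚ_[p] N ^ m).coeff n * y ^ n‖ ≤ (p : ℝ) ^ (-(n : ℤ) - m) := by
  have hp : (0 : ℝ) < p := Nat.cast_pos.mpr (Fact.out : p.Prime).pos
  calc _ = ‖(logTrunc ℚ_[p] N ^ m).coeff n‖ * ‖y‖ ^ n := by rw [norm_mul, norm_pow]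
    _ ≤ (p : ℝ) ^ ((n : ℤ) - m * 1) * ((p : ℝ) ^ (-2 : ℤ)) ^ n := by
        gcongr
        exact Polynomial.norm_coeff_pow_le_zpow hp (norm_coeff_le N) m n
    _ = (p : ℝ) ^ (-(n : ℤ) - m) := by
        rw [← zpow_natCast, ← zpow_mul, ← zpow_add₀ hp.ne']; ring_nf

theorem stirling_sum_reduction_general (p : ℕ) [Fact p.Prime] (s m : ℕ)
    (hs : 1 ≤ s) (hm : 1 ≤ m) (α : ℤ_[p]) :
    ‖(∑ j ∈ Finset.Icc m (s - 1),
          (stirling1 j m : ℚ_[p]) * (α : ℚ_[p]) ^ j * (p : ℚ_[p]) ^ (2 * j - 1) /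
            (j.factorial : ℚ_[p])) -
        (p : ℚ_[p]) ^ (2 * m - 1) / (m.factorial : ℚ_[p]) *
          (∑ j ∈ Finset.Icc 1 (s - 1),
              ((-1 : ℚ_[p]) ^ (j + 1) / (j : ℚ_[p])) * (α : ℚ_[p]) ^ j *
                (p : ℚ_[p]) ^ (2 * j - 2)) ^ m‖ ≤ (p : ℝ) ^ (-(s : ℤ)) := by
  obtain ⟨N, rfl⟩ : ∃ N, s = N + 1 := ⟨s - 1, by omega⟩
  have hp : (p : ℚ_[p]) ≠ 0 := Nat.cast_ne_zero.mpr (Fact.out : p.Prime).ne_zero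
  have hp₁ : (1 : ℝ) ≤ p := mod_cast (Fact.out : p.Prime).one_le
  rw [Nat.add_sub_cancel, sum_Icc_stirling1_eq_sum_coeff_pow_logTrunc hp _ N hm,
    pow_div_factorial_mul_pow_eq_eval_pow_logTrunc hp _ N hm, ← mul_sub, norm_mul, norm_sub_rev]
  have hy : ‖(α : ℚ_[p]) * p ^ 2‖ ≤ (p : ℝ) ^ (-2 : ℤ) := by
    rw [norm_mul, Padic.norm_p_pow]
    exact mul_le_of_le_one_left (by positivity) α.norm_le_one
  have htail : ‖(logTrunc ℚ_[p] N ^ m).eval ((α : ℚ_[p]) * p ^ 2) -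
      ∑ n ∈ range (N + 1), (logTrunc ℚ_[p] N ^ m).coeff n * ((α : ℚ_[p]) * p ^ 2) ^ n‖ ≤
        (p : ℝ) ^ (-((N + 1 : ℕ) : ℤ) - m) :=
    norm_eval_sub_sum_range_le _ _ _ (by positivity) fun n hn ↦
      (logTrunc.norm_coeff_pow_mul_pow_le N m n hy).trans (zpow_le_zpow_right₀ hp₁ (by omega))
  calc _ ≤ (p : ℝ) ^ (m : ℤ) * (p : ℝ) ^ (-((N + 1 : ℕ) : ℤ) - m) :=
        mul_le_mul (Padic.norm_inv_p_mul_factorial_le m (by omega)) htail (norm_nonneg _)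
          (by positivity)
    _ = (p : ℝ) ^ (-((N + 1 : ℕ) : ℤ)) := by
        rw [← zpow_add₀ (by positivity)]; ring_nf

theorem stirling_sum_reduction (p : ℕ) [Fact p.Prime] (hp : 2 < p) (s m : ℕ)
    (hs : 1 ≤ s) (hm : 1 ≤ m) (α : ℤ_[p]) :
    ‖(∑ j ∈ Finset.Icc m (s - 1),
          (stirling1 j m : ℚ_[p]) * (α : ℚ_[p]) ^ j * (p : ℚ_[p]) ^ (2 * j - 1) /
            (j.factorial : ℚ_[p])) -
        (p : ℚ_[p]) ^ (2 * m - 1) / (m.factorial : ℚ_[p]) *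
          (∑ j ∈ Finset.Icc 1 (s - 1),
              ((-1 : ℚ_[p]) ^ (j + 1) / (j : ℚ_[p])) * (α : ℚ_[p]) ^ j *
                (p : ℚ_[p]) ^ (2 * j - 2)) ^ m‖ ≤ (p : ℝ) ^ (-(s : ℤ)) :=
  stirling_sum_reduction_general p s m hs hm α
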